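/- arXiv:1801.00242 — 4 statements merged into one kernel-verified Lean document; each statement's English description precedes it below -/
import Mathlib

section
/- Let K ⊂ ℝ^d be a centrally symmetric convex body (K = −K, 0 in its interior) and let γ : ℝ/ℤ → ∂K be a closed Lipschitz curve lying on the boundary of K which is centrally symmetric, i.e. γ(t + 1/2) = −γ(t) for all t. Then the length of γ in the norm whose unit ball is K satisfies ∫₀¹ g_K(γ̇(t)) dt ≥ 4 + 4/d. -/
noncomputable section

open Set intervalIntegral

/-- `ℝ^d`, the real Euclidean space. -/
abbrev Rd (d : ℕ) := EuclideanSpace ℝ (Fin d)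

/-!
Cut the half-curve `γ|[0, 1/2]` into `n = d + 1` arcs of equal `g_K`-length `h`; with the
antipodal copies this gives points `x_k = γ(t_k)` on `∂K` with `x_{k+n} = -x_k`, and a chord is
no longer than its arc: `g_K(x_{k+1} - x_k) ≤ h`. Since `n > d`, the points `x_1, …, x_n` satisfy
a nontrivial linear relation; centred partial sums of its (antiperiodically extended)
coefficients form an `n`-antiperiodic sequence `S ≠ 0`. Evaluating the relation shifted by `m` at a
supporting functional of `K` at `-x_m` and summing by parts gives
`|h ∑_{k<n} S_{m+k}| ≤ max |S| · (nh - 2)` for every `m`; consecutive windows differ by `2 S_m`,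
so at a maximiser of `|S|` this reads `h + 2 ≤ nh`. Hence the half-length `nh` is at least
`2 + 2/d`.
-/

open Function Finset MeasureTheory

theorem exists_linearMap_le_gauge_eq_gauge {E : Type*} [AddCommGroup E] [Module ℝ E] {K : Set E}
    (hKconv : Convex ℝ K) (hKabs : Absorbent ℝ K) (x : E) :
    ∃ f : E →ₗ[ℝ] ℝ, (∀ z, f z ≤ gauge K z) ∧ f x = gauge K x := by
  have hker : ∀ c : ℝ, c • x = 0 → c • gauge K x = 0 := fun c hc => by
    rcases smul_eq_zero.1 hc with rfl | rfl <;> simp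
  obtain ⟨f, hfx, hf⟩ := exists_extension_of_le_sublinear
    (LinearPMap.mkSpanSingleton' x (gauge K x) hker) (gauge K)
    (fun c hc z => gauge_smul_of_nonneg hc.le z) (gauge_add_le hKconv hKabs) (by
      rintro ⟨-, hz⟩
      obtain ⟨c, rfl⟩ := Submodule.mem_span_singleton.1 hz
      rw [LinearPMap.mkSpanSingleton'_apply, smul_eq_mul]
      rcases le_total 0 c with hc | hc
      · exact (gauge_smul_of_nonneg hc x).ge
      · exact (mul_nonpos_of_nonpos_of_nonneg hc (gauge_nonneg x)).trans (gauge_nonneg _))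
  exact ⟨f, hf, (hfx ⟨x, Submodule.mem_span_singleton_self x⟩).trans
    (LinearPMap.mkSpanSingleton'_apply_self _ _ _ _)⟩

section Sequences

variable {n : ℕ}

theorem Function.Periodic.sum_range_add {M : Type*} [AddCommGroup M] {f : ℕ → M}
    (hf : Periodic f n) (m : ℕ) : ∑ k ∈ range n, f (m + k) = ∑ k ∈ range n, f k := by
  induction m with
  | zero => simp
  | succ m ih =>
    have h := (sum_range_succ' (fun k => f (m + k)) n).symm.trans
      (sum_range_succ (fun k => f (m + k)) n)
    rw [add_zero, hf m] at h
    simpa [add_right_comm m 1, add_assoc, ← ih] using add_right_cancel h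

theorem Function.Periodic.exists_forall_ge_nat {α : Type*} [LinearOrder α] {f : ℕ → α}
    (hf : Periodic f n) (hn : 0 < n) : ∃ k₀, ∀ k, f k ≤ f k₀ := by
  obtain ⟨k₀, -, hk₀⟩ := exists_max_image (range n) f ⟨0, mem_range.2 hn⟩
  exact ⟨k₀, fun k => hf.map_mod_nat k ▸ hk₀ _ (mem_range.2 (Nat.mod_lt k hn))⟩

theorem exists_antiperiodic_eq_of_lt {R : Type*} [Ring R] (hn : 0 < n) (g : ℕ → R) :
    ∃ μ : ℕ → R, Antiperiodic μ n ∧ ∀ k < n, μ k = g k := by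
  refine ⟨fun k => (-1) ^ (k / n) * g (k % n), fun k => ?_, fun k hk => ?_⟩
  · simp [Nat.add_div_right k hn, pow_succ]
  · simp [Nat.div_eq_of_lt hk, Nat.mod_eq_of_lt hk]

theorem Function.Antiperiodic.sum_range_sub_half {μ : ℕ → ℝ} (hμ : Antiperiodic μ n) :
    Antiperiodic (fun k => ∑ j ∈ range k, μ j - (∑ j ∈ range n, μ j) / 2) n := fun k => by
  have hμ' : ∀ j, μ (n + j) = -μ j := fun j => add_comm n j ▸ hμ j
  simp only [add_comm k n, sum_range_add, hμ', sum_neg_distrib]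
  ring

theorem sum_mul_sub_eq_zero_of_sum_sub_mul_eq_zero {s v : ℕ → ℝ} (hs : s n = -s 0)
    (hv : v n = -v 0) (hrow : ∑ k ∈ range n, (s (k + 1) - s k) * v (k + 1) = 0) :
    ∑ k ∈ range n, s k * (v (k + 1) - v k) = 0 := by
  have htel := sum_range_sub (fun k => s k * v k) n
  rw [hs, hv, neg_mul_neg, sub_self] at htel
  calc ∑ k ∈ range n, s k * (v (k + 1) - v k)
      = ∑ k ∈ range n, (s (k + 1) * v (k + 1) - s k * v k)
        - ∑ k ∈ range n, (s (k + 1) - s k) * v (k + 1) := by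
        rw [← sum_sub_distrib]; exact sum_congr rfl fun k _ => by ring
    _ = 0 := by rw [htel, hrow, sub_zero]

theorem abs_mul_sum_le_mul_sub_two {s v : ℕ → ℝ} {h β : ℝ} (hs : s n = -s 0) (hv0 : v 0 = -1)
    (hvn : v n = 1) (hrow : ∑ k ∈ range n, (s (k + 1) - s k) * v (k + 1) = 0)
    (hv : ∀ k < n, v (k + 1) - v k ≤ h) (hβ : ∀ k < n, |s k| ≤ β) :
    |h * ∑ k ∈ range n, s k| ≤ β * (n * h - 2) := by
  have habel := sum_mul_sub_eq_zero_of_sum_sub_mul_eq_zero hs (by rw [hv0, hvn, neg_neg]) hrow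
  have hslack : ∀ k ∈ range n, 0 ≤ h - (v (k + 1) - v k) := fun k hk =>
    sub_nonneg.2 (hv k (mem_range.1 hk))
  calc |h * ∑ k ∈ range n, s k| = |∑ k ∈ range n, s k * (h - (v (k + 1) - v k))| := by
        rw [mul_sum, ← sub_zero (∑ k ∈ range n, h * s k), ← habel, ← sum_sub_distrib]
        exact congrArg _ (sum_congr rfl fun k _ => by ring)
    _ ≤ ∑ k ∈ range n, |s k| * (h - (v (k + 1) - v k)) := by
        refine (abs_sum_le_sum_abs _ _).trans_eq (sum_congr rfl fun k hk => ?_)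
        rw [abs_mul, abs_of_nonneg (hslack k hk)]
    _ ≤ ∑ k ∈ range n, β * (h - (v (k + 1) - v k)) :=
        sum_le_sum fun k hk => mul_le_mul_of_nonneg_right (hβ k (mem_range.1 hk)) (hslack k hk)
    _ = β * (n * h - 2) := by
        rw [← mul_sum, sum_sub_distrib, sum_range_sub, hv0, hvn, sum_const, card_range,
          nsmul_eq_mul]
        ring

theorem Function.Antiperiodic.abs_le_of_abs_sum_range_le {S : ℕ → ℝ} (hS : Antiperiodic S n)
    {C : ℝ} (hC : ∀ m, |∑ k ∈ range n, S (m + k)| ≤ C) (m : ℕ) : |S m| ≤ C := by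
  have hshift : ∑ k ∈ range n, S (m + 1 + k) = ∑ k ∈ range n, S (m + k) - 2 * S m := by
    have h := (sum_range_succ' (fun k => S (m + k)) n).symm.trans
      (sum_range_succ (fun k => S (m + k)) n)
    rw [add_zero, hS m] at h
    simp only [add_right_comm m 1, add_assoc] at h ⊢
    linarith
  have h1 := hC m
  have h2 := hC (m + 1)
  rw [hshift] at h2
  rw [abs_le] at h1 h2 ⊢
  constructor <;> linarith

end Sequences

theorem add_two_le_mul_of_antipodal_polygon {E : Type*} [AddCommGroup E] [Module ℝ E]
    {K : Set E} (hKconv : Convex ℝ K) (hKabs : Absorbent ℝ K) {n : ℕ} (hn : 0 < n)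
    {x : ℕ → E} (hx : Antiperiodic x n) (hgauge : ∀ k, gauge K (x k) = 1)
    (hdep : ¬LinearIndependent ℝ fun i : Fin n => x (i + 1)) {h : ℝ}
    (hedge : ∀ k, gauge K (x (k + 1) - x k) ≤ h) : h + 2 ≤ n * h := by
  obtain ⟨g, hg, i₀, hi₀⟩ := Fintype.not_linearIndependent_iff.1 hdep
  obtain ⟨μ, hμ, hμg⟩ :=
    exists_antiperiodic_eq_of_lt hn fun k => if hk : k < n then g ⟨k, hk⟩ else 0
  set S : ℕ → ℝ := fun k => ∑ j ∈ range k, μ j - (∑ j ∈ range n, μ j) / 2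
  have hS : Antiperiodic S n := hμ.sum_range_sub_half
  have hΔS : ∀ k, S (k + 1) - S k = μ k := fun k => by simp [S, sum_range_succ]
  have hwin : ∀ m, ∑ k ∈ range n, (S (m + (k + 1)) - S (m + k)) • x (m + (k + 1)) = 0 := by
    have hper : Periodic (fun k => μ k • x (k + 1)) n := fun k => by
      simp only [add_right_comm k n 1, hμ k, hx (k + 1), neg_smul_neg]
    intro m
    simp only [← add_assoc, hΔS]
    rw [hper.sum_range_add m, ← hg, ← Fin.sum_univ_eq_sum_range (fun k => μ k • x (k + 1))]
    exact sum_congr rfl fun i _ => by rw [hμg i i.isLt, dif_pos i.isLt]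
  choose F hFle hFeq using fun m => exists_linearMap_le_gauge_eq_gauge hKconv hKabs (x (m + n))
  have hrow : ∀ m, ∑ k ∈ range n, (S (m + (k + 1)) - S (m + k)) * F m (x (m + (k + 1))) = 0 :=
    fun m => by simpa only [map_sum, map_smul, smul_eq_mul, map_zero] using congrArg (F m) (hwin m)
  obtain ⟨k₀, hk₀⟩ : ∃ k₀, ∀ k, |S k| ≤ |S k₀| :=
    Periodic.exists_forall_ge_nat (fun k => by simp only [hS k, abs_neg]) hn
  have hβ : 0 < |S k₀| := by
    by_contra! hle
    have hS0 : ∀ k, S k = 0 := fun k => abs_nonpos_iff.1 ((hk₀ k).trans hle)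
    have := hΔS i₀
    rw [hS0, hS0, hμg i₀ i₀.isLt, dif_pos i₀.isLt, sub_zero] at this
    exact hi₀ this.symm
  have hwindow : ∀ m, |∑ k ∈ range n, (h • S) (m + k)| ≤ |S k₀| * (n * h - 2) := fun m => by
    simp only [Pi.smul_apply, smul_eq_mul, ← mul_sum]
    refine abs_mul_sum_le_mul_sub_two (s := fun k => S (m + k)) (v := fun k => F m (x (m + k)))
      (hS m) ?_ ?_ (hrow m) (fun k _ => ?_) (fun k _ => hk₀ _)
    · rw [add_zero, ← neg_neg (x m), ← hx m, map_neg, hFeq, hgauge]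
    · rw [hFeq, hgauge]
    · rw [← map_sub]
      exact (hFle m _).trans (hedge _)
  have hk₀bound := (hS.smul h).abs_le_of_abs_sum_range_le hwindow k₀
  rw [Pi.smul_apply, smul_eq_mul, abs_mul] at hk₀bound
  nlinarith [le_abs_self h]

section Curve

theorem Function.Antiperiodic.deriv {𝕜 F : Type*} [NontriviallyNormedField 𝕜]
    [NormedAddCommGroup F] [NormedSpace 𝕜 F] {f : 𝕜 → F} {c : 𝕜} (hf : Antiperiodic f c) :
    Antiperiodic (deriv f) c := fun x => by
  rw [← deriv_comp_add_const, hf.funext, deriv.neg']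

variable {E : Type*} [NormedAddCommGroup E] [NormedSpace ℝ E] {K : Set E} {γ : ℝ → E}
  {L : NNReal}

theorem LipschitzWith.intervalIntegrable_gauge_deriv [CompleteSpace E] (hKconv : Convex ℝ K)
    (hK : K ∈ nhds 0) (hγ : LipschitzWith L γ) (a b : ℝ) :
    IntervalIntegrable (fun t => gauge K (deriv γ t)) volume a b := by
  obtain ⟨C, hC⟩ := hKconv.lipschitz_gauge hK
  refine (intervalIntegrable_const (c := (C * L : ℝ))).mono_fun'
    (hC.continuous.comp_aestronglyMeasurable (aestronglyMeasurable_deriv γ _))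
    (Filter.Eventually.of_forall fun t => ?_)
  have h := hC.dist_le_mul (deriv γ t) 0
  rw [gauge_zero, dist_zero_right, dist_zero_right] at h
  exact h.trans (mul_le_mul_of_nonneg_left (norm_deriv_le_of_lipschitz hγ) C.2)

theorem LipschitzWith.gauge_sub_le_integral_gauge_deriv [FiniteDimensional ℝ E]
    (hKconv : Convex ℝ K) (hK : K ∈ nhds 0) (hγ : LipschitzWith L γ) {a b : ℝ} (hab : a ≤ b) :
    gauge K (γ b - γ a) ≤ ∫ t in a..b, gauge K (deriv γ t) := by
  obtain ⟨f, hfle, hfeq⟩ :=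
    exists_linearMap_le_gauge_eq_gauge hKconv (absorbent_nhds_zero hK) (γ b - γ a)
  let φ : E →L[ℝ] ℝ := LinearMap.toContinuousLinearMap f
  have hφγ : AbsolutelyContinuousOnInterval (φ ∘ γ) a b :=
    (φ.lipschitz.comp hγ).lipschitzOnWith.absolutelyContinuousOnInterval
  calc gauge K (γ b - γ a) = φ (γ b) - φ (γ a) := by rw [← hfeq, ← map_sub]; rfl
    _ = ∫ t in a..b, deriv (φ ∘ γ) t := hφγ.integral_deriv_eq_sub.symm
    _ ≤ ∫ t in a..b, gauge K (deriv γ t) := by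
      refine integral_mono_ae hab hφγ.intervalIntegrable_deriv
        (hγ.intervalIntegrable_gauge_deriv hKconv hK a b) ?_
      filter_upwards [hγ.ae_differentiableAt_real] with t ht
      rw [(φ.hasFDerivAt.comp_hasDerivAt t ht.hasDerivAt).deriv]
      exact hfle _

end Curve

theorem Function.Periodic.integral_zero_add_nat_mul {E : Type*} [NormedAddCommGroup E]
    [NormedSpace ℝ E] {G : ℝ → E} {c : ℝ} (hG : Periodic G c)
    (hGint : ∀ a b, IntervalIntegrable G volume a b) (y : ℝ) (q : ℕ) :
    ∫ s in 0..y + q * c, G s = (∫ s in 0..y, G s) + q • ∫ s in 0..c, G s := by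
  induction q with
  | zero => simp
  | succ q ih =>
    have h := hG.intervalIntegral_add_eq_add 0 (y + q * c) hGint
    rw [zero_add] at h
    rw [Nat.cast_succ, add_one_mul, ← add_assoc, h, ih, succ_nsmul, add_assoc]

theorem Function.Periodic.exists_seq_integral_eq_div {G : ℝ → ℝ} {c : ℝ} (hG : Periodic G c)
    (hG0 : ∀ t, 0 ≤ G t) (hGint : ∀ a b, IntervalIntegrable G volume a b)
    (hpos : 0 < ∫ s in 0..c, G s) {n : ℕ} (hn : 0 < n) :
    ∃ t : ℕ → ℝ, (∀ k, t k ≤ t (k + 1)) ∧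
      (∀ k, ∫ s in t k..t (k + 1), G s = (∫ s in 0..c, G s) / n) ∧
      ∀ k, t (k + n) = t k + c := by
  set ℓ := ∫ s in 0..c, G s
  set A : ℝ → ℝ := fun y => ∫ s in 0..y, G s
  have hAshift : ∀ y (q : ℕ), A (y + q * c) = A y + q * ℓ := fun y q => by
    simpa only [nsmul_eq_mul] using hG.integral_zero_add_nat_mul hGint y q
  have hlevel : ∀ y ∈ uIcc 0 ℓ, ∃ s, A s = y := fun y hy => by
    obtain ⟨s, -, hs⟩ := intermediate_value_uIcc (a := 0) (b := c) (f := A)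
      (continuous_primitive hGint 0).continuousOn (by simpa [A, ℓ] using hy)
    exact ⟨s, hs⟩
  choose! T hT using hlevel
  set h := ℓ / n
  have hh : 0 < h := div_pos hpos (Nat.cast_pos.2 hn)
  have hnh : (n : ℝ) * h = ℓ := mul_div_cancel₀ _ (Nat.cast_pos.2 hn).ne'
  let t : ℕ → ℝ := fun k => T ((k % n : ℕ) * h) + (k / n : ℕ) * c
  have hAt : ∀ k, A (t k) = k * h := fun k => by
    have hmod : ((k % n : ℕ) : ℝ) * h ∈ uIcc 0 ℓ := by
      rw [uIcc_of_le hpos.le]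
      refine ⟨by positivity, ?_⟩
      rw [← hnh]
      exact mul_le_mul_of_nonneg_right (Nat.cast_le.2 (Nat.mod_lt k hn).le) hh.le
    rw [hAshift, hT _ hmod, ← hnh]
    conv_rhs => rw [← Nat.mod_add_div k n]
    push_cast
    ring
  have hstep : ∀ k, ∫ s in t k..t (k + 1), G s = h := fun k => by
    rw [← integral_interval_sub_left (hGint 0 _) (hGint 0 _)]
    simp only [A] at hAt
    rw [hAt, hAt]
    push_cast
    ring
  refine ⟨t, fun k => ?_, hstep, fun k => ?_⟩
  · by_contra! hlt
    have h1 := intervalIntegral.integral_nonneg (μ := volume) hlt.le fun s _ => hG0 s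
    rw [integral_symm, hstep] at h1
    linarith
  · simp only [t, Nat.add_mod_right, Nat.add_div_right k hn]
    push_cast
    ring

theorem four_add_four_div_le_two_mul {d : ℕ} {ℓ : ℝ} (h : ℓ / (d + 1) + 2 ≤ ℓ) :
    4 + 4 / (d : ℝ) ≤ 2 * ℓ := by
  have hd1 : (0 : ℝ) < d + 1 := by positivity
  have hdℓ : 2 * (d + 1) ≤ d * ℓ := by
    rw [div_add' _ _ _ hd1.ne', div_le_iff₀ hd1] at h
    linarith
  rcases d.eq_zero_or_pos with rfl | hd
  · norm_num at hdℓ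
  · have hd' : (0 : ℝ) < d := Nat.cast_pos.2 hd
    calc 4 + 4 / (d : ℝ) = 2 * (2 * (d + 1)) / d := by field_simp; ring
      _ ≤ 2 * (d * ℓ) / d := by gcongr
      _ = 2 * ℓ := by field_simp

theorem symmetric_curve_on_boundary_length_general {d : ℕ} (K : Set (Rd d))
    (hKconv : Convex ℝ K) (hK0 : (0 : Rd d) ∈ interior K)
    (hKsym : K = -K)
    (γ : ℝ → Rd d) (L : NNReal) (hlip : LipschitzWith L γ)
    (hbd : ∀ t, γ t ∈ frontier K)
    (hsymm : ∀ t, γ (t + 1 / 2) = -γ t) :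
    4 + 4 / (d : ℝ) ≤ ∫ t in (0 : ℝ)..1, gauge K (deriv γ t) := by
  have hK : K ∈ nhds 0 := mem_interior_iff_mem_nhds.1 hK0
  have hγ : Antiperiodic γ (1 / 2) := hsymm
  have hgauge_neg : ∀ z, gauge K (-z) = gauge K z :=
    gauge_neg fun z hz => by rw [hKsym]; simpa using hz
  have hgauge_γ : ∀ t, gauge K (γ t) = 1 := fun t =>
    (gauge_eq_one_iff_mem_frontier hKconv hK).2 (hbd t)
  have hGint := hlip.intervalIntegrable_gauge_deriv hKconv hK
  have hGper : Periodic (fun t => gauge K (deriv γ t)) (1 / 2) := fun t => by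
    simp only [hγ.deriv t, hgauge_neg]
  set ℓ := ∫ t in (0 : ℝ)..1 / 2, gauge K (deriv γ t)
  have htotal : ∫ t in (0 : ℝ)..1, gauge K (deriv γ t) = 2 * ℓ := by
    have h := hGper.intervalIntegral_add_eq_add 0 (1 / 2) hGint
    norm_num at h
    linarith
  have hℓ : 2 ≤ ℓ := by
    have h := hlip.gauge_sub_le_integral_gauge_deriv hKconv hK (a := 0) (b := 1 / 2) (by norm_num)
    rwa [← zero_add (1 / 2 : ℝ), hγ 0, zero_add, ← neg_add', ← two_smul ℝ, hgauge_neg,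
      gauge_smul_of_nonneg zero_le_two, hgauge_γ, smul_eq_mul, mul_one] at h
  obtain ⟨t, ht_mono, ht_step, ht_shift⟩ :=
    hGper.exists_seq_integral_eq_div (fun _ => gauge_nonneg _) hGint (by linarith) d.succ_pos
  have hpoly := add_two_le_mul_of_antipodal_polygon hKconv (absorbent_nhds_zero hK) d.succ_pos
    (x := fun k => γ (t k)) (fun k => by simp only [ht_shift, hγ (t k)]) (fun k => hgauge_γ _)
    (fun hli => by simpa using hli.fintype_card_le_finrank)
    (fun k => (hlip.gauge_sub_le_integral_gauge_deriv hKconv hK (ht_mono k)).trans_eq (ht_step k))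
  rw [mul_div_cancel₀ _ (by positivity), Nat.cast_succ] at hpoly
  rw [htotal]
  exact four_add_four_div_le_two_mul hpoly

/-- Schaffer: a centrally symmetric closed Lipschitz curve on the boundary of a
centrally symmetric convex body `K ⊂ ℝ^d` has `g_K`-length at least `4 + 4/d`. -/
theorem symmetric_curve_on_boundary_length {d : ℕ} (K : Set (Rd d))
    (hKcomp : IsCompact K) (hKconv : Convex ℝ K) (hK0 : (0 : Rd d) ∈ interior K)
    (hKsym : K = -K)
    (γ : ℝ → Rd d) (L : NNReal) (hlip : LipschitzWith L γ)
    (hper : Function.Periodic γ 1)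
    (hbd : ∀ t, γ t ∈ frontier K)
    (hsymm : ∀ t, γ (t + 1 / 2) = -γ t) :
    4 + 4 / (d : ℝ) ≤ ∫ t in (0 : ℝ)..1, gauge K (deriv γ t) :=
  symmetric_curve_on_boundary_length_general K hKconv hK0 hKsym γ L hlip hbd hsymm
end
end

section
/- Let K ⊂ ℝ^d be a convex body with 0 in its interior whose gauge g_K is differentiable in a neighborhood of ∂K, and let γ : [0,T] → ∂K be a continuous closed curve (γ(0) = γ(T)) such that the outer normals along γ average to zero: ∫₀ᵀ ∇g_K(γ(t)) dt = 0. Then γ cannot be translated into the interior of K: for every v ∈ ℝ^d there exists t ∈ [0,T] with γ(t) + v ∉ int K. -/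
/-!
Suppose the translate `γ + v` of the curve lies in `int K`. The gauge is convex, so at a point of
differentiability it lies above its tangent plane; at `x = γ t ∈ ∂K` this gives
`⟪∇g_K x, v⟫ ≤ g_K (x + v) - g_K x < 1 - 1 = 0`. Integrating over `[0, T]` gives
`⟪∫ ∇g_K (γ t) dt, v⟫ < 0`, contradicting the vanishing of the integral. The integral is not
Lean's junk value: `∇g_K` is bounded by the Lipschitz constant of `g_K` and is measurable along
the continuous curve.
-/

noncomputable section

open Set intervalIntegral

open MeasureTheory

open scoped RealInnerProductSpace NNReal Topology

theorem ConvexOn.le_sub_of_hasFDerivAt {E : Type*} [NormedAddCommGroup E] [NormedSpace ℝ E]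
    {f : E → ℝ} (hf : ConvexOn ℝ univ f) {f' : E →L[ℝ] ℝ} {x : E} (hf' : HasFDerivAt f f' x)
    (y : E) : f' (y - x) ≤ f y - f x := by
  have hline : ConvexOn ℝ univ (f ∘ AffineMap.lineMap (k := ℝ) x y) := by
    simpa using hf.comp_affineMap (AffineMap.lineMap (k := ℝ) x y)
  have hderiv : HasDerivAt (f ∘ AffineMap.lineMap (k := ℝ) x y) (f' (y - x)) 0 := by
    refine HasFDerivAt.comp_hasDerivAt 0 ?_ AffineMap.hasDerivAt_lineMap
    simpa using hf'
  simpa [slope_def_field] using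
    hline.le_slope_of_hasDerivAt (mem_univ 0) (mem_univ 1) one_pos hderiv

theorem convexOn_gauge {E : Type*} [AddCommGroup E] [Module ℝ E] {s : Set E}
    (hs : Convex ℝ s) (habs : Absorbent ℝ s) : ConvexOn ℝ univ (gauge s) := by
  refine ⟨convex_univ, fun x _ y _ a b ha hb _ => ?_⟩
  calc gauge s (a • x + b • y) ≤ gauge s (a • x) + gauge s (b • y) := gauge_add_le hs habs _ _
    _ = a • gauge s x + b • gauge s y := by rw [gauge_smul_of_nonneg ha, gauge_smul_of_nonneg hb]

theorem HasFDerivAt.gauge_apply_neg_of_add_mem_interior {E : Type*} [NormedAddCommGroup E]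
    [NormedSpace ℝ E] {s : Set E} (hs : Convex ℝ s) (hs₀ : s ∈ 𝓝 0) {f' : E →L[ℝ] ℝ} {x v : E}
    (hf' : HasFDerivAt (gauge s) f' x) (hx : x ∈ frontier s) (hxv : x + v ∈ interior s) :
    f' v < 0 := by
  have h := (convexOn_gauge hs (absorbent_nhds_zero hs₀)).le_sub_of_hasFDerivAt hf' (x + v)
  rw [add_sub_cancel_left, (gauge_eq_one_iff_mem_frontier hs hs₀).mpr hx] at h
  have hlt : gauge s (x + v) < 1 := interior_subset_gauge_lt_one s hxv
  linarith

section Gradient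

variable {E : Type*} [NormedAddCommGroup E] [InnerProductSpace ℝ E] [CompleteSpace E]

theorem HasGradientAt.norm_le_of_lipschitz {f : E → ℝ} {f' x : E} {K : ℝ≥0}
    (hf' : HasGradientAt f f' x) (hf : LipschitzWith K f) : ‖f'‖ ≤ K := by
  simpa using hf'.hasFDerivAt.le_of_lipschitz hf

variable [MeasurableSpace E] [BorelSpace E] [SecondCountableTopology E]

theorem aestronglyMeasurable_comp_of_hasGradientAt {α : Type*} [MeasurableSpace α]
    {μ : Measure α} {f : E → ℝ} {g : E → E} {U : Set E}
    (hg : ∀ x ∈ U, HasGradientAt f (g x) x) {γ : α → E} (hγ : AEMeasurable γ μ)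
    (hγU : ∀ᵐ t ∂μ, γ t ∈ U) : AEStronglyMeasurable (fun t => g (γ t)) μ := by
  have hmeas : AEMeasurable (fun t => (InnerProductSpace.toDual ℝ E).symm (fderiv ℝ f (γ t))) μ :=
    (InnerProductSpace.toDual ℝ E).symm.continuous.measurable.comp_aemeasurable
      ((measurable_fderiv ℝ f).comp_aemeasurable hγ)
  refine hmeas.aestronglyMeasurable.congr ?_
  filter_upwards [hγU] with t ht
  rw [(hg _ ht).hasFDerivAt.fderiv, LinearIsometryEquiv.symm_apply_apply]

theorem intervalIntegrable_comp_of_hasGradientAt {f : E → ℝ} {K : ℝ≥0} (hf : LipschitzWith K f)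
    {g : E → E} {U : Set E} (hg : ∀ x ∈ U, HasGradientAt f (g x) x) {γ : ℝ → E} {a b : ℝ}
    (hγ : ContinuousOn γ (uIcc a b)) (hγU : MapsTo γ (uIcc a b) U) :
    IntervalIntegrable (fun t => g (γ t)) volume a b := by
  refine IntegrableOn.intervalIntegrable <|
    Integrable.mono' (integrableOn_const (C := (K : ℝ)) isCompact_uIcc.measure_ne_top) ?_ ?_
  · exact aestronglyMeasurable_comp_of_hasGradientAt hg (hγ.aemeasurable measurableSet_uIcc)
      ((ae_restrict_iff' measurableSet_uIcc).mpr (ae_of_all _ hγU))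
  · exact (ae_restrict_iff' measurableSet_uIcc).mpr
      (ae_of_all _ fun t ht => (hg _ (hγU ht)).norm_le_of_lipschitz hf)

end Gradient

theorem normals_average_zero_implies_nontranslatable_general {d : ℕ} (K : Set (Rd d))
    (hKconv : Convex ℝ K) (hK0 : (0 : Rd d) ∈ interior K)
    (gradg : Rd d → Rd d) (U : Set (Rd d)) (hUfr : frontier K ⊆ U)
    (hgrad : ∀ x ∈ U, HasGradientAt (gauge K) (gradg x) x)
    (T : ℝ) (hT : 0 < T) (γ : ℝ → Rd d)
    (hcont : ContinuousOn γ (Icc 0 T))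
    (hbd : ∀ t ∈ Icc (0 : ℝ) T, γ t ∈ frontier K)
    (hzero : (∫ t in (0 : ℝ)..T, gradg (γ t)) = 0) :
    ∀ v : Rd d, ∃ t ∈ Icc (0 : ℝ) T, γ t + v ∉ interior K := by
  intro v
  by_contra! hv
  have hK : K ∈ 𝓝 0 := mem_interior_iff_mem_nhds.mp hK0
  obtain ⟨L, hL⟩ := hKconv.lipschitz_gauge hK
  have hint : IntervalIntegrable (fun t => gradg (γ t)) volume 0 T := by
    refine intervalIntegrable_comp_of_hasGradientAt hL hgrad ?_ ?_ <;> rw [uIcc_of_le hT.le]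
    exacts [hcont, fun t ht => hUfr (hbd t ht)]
  have hneg : ∀ t ∈ Icc 0 T, ⟪v, gradg (γ t)⟫ < 0 := fun t ht => by
    simpa [real_inner_comm] using
      (hgrad _ (hUfr (hbd t ht))).hasFDerivAt.gauge_apply_neg_of_add_mem_interior
        hKconv hK (hbd t ht) (hv t ht)
  have hzero_v : ∫ t in 0..T, ⟪v, gradg (γ t)⟫ = 0 := by
    simpa [hzero] using (innerSL ℝ v).intervalIntegral_comp_comm hint
  have hint_v : IntervalIntegrable (fun t => ⟪v, gradg (γ t)⟫) volume 0 T :=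
    ⟨hint.1.const_inner v, hint.2.const_inner v⟩
  have hpos : 0 < ∫ t in 0..T, -⟪v, gradg (γ t)⟫ :=
    intervalIntegral_pos_of_pos_on hint_v.neg
      (fun t ht => neg_pos.mpr (hneg t (Ioo_subset_Icc_self ht))) hT
  rw [intervalIntegral.integral_neg, hzero_v, neg_zero] at hpos
  exact hpos.false

/-- if the outer normals `∇g_K` along a continuous closed curve
`γ : [0,T] → ∂K` integrate to zero, then `γ` cannot be translated into the interior of `K`. -/
theorem normals_average_zero_implies_nontranslatable {d : ℕ} (K : Set (Rd d))
    (hKcomp : IsCompact K) (hKconv : Convex ℝ K) (hK0 : (0 : Rd d) ∈ interior K)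
    (gradg : Rd d → Rd d) (U : Set (Rd d)) (hUopen : IsOpen U) (hUfr : frontier K ⊆ U)
    (hgrad : ∀ x ∈ U, HasGradientAt (gauge K) (gradg x) x)
    (T : ℝ) (hT : 0 < T) (γ : ℝ → Rd d)
    (hcont : ContinuousOn γ (Icc 0 T))
    (hbd : ∀ t ∈ Icc (0 : ℝ) T, γ t ∈ frontier K)
    (hclosed : γ 0 = γ T)
    (hzero : (∫ t in (0 : ℝ)..T, gradg (γ t)) = 0) :
    ∀ v : Rd d, ∃ t ∈ Icc (0 : ℝ) T, γ t + v ∉ interior K :=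
  normals_average_zero_implies_nontranslatable_general K hKconv hK0 gradg U hUfr hgrad T hT γ hcont
    hbd hzero
end
end

section
/- Let K ⊂ ℂⁿ be a convex body with 0 in its interior whose gauge g_K is differentiable in a neighborhood of ∂K, and let γ : [0,T] → ∂K be a closed characteristic, i.e. a C¹ curve with γ(0) = γ(T) and γ̇(t) = J∇g_K(γ(t)) for all t. Then the g_K-length of γ satisfies ∫₀ᵀ g_K(γ̇(t)) dt ≤ T · sup{ω(x,y) : x, y ∈ K°} = T / c_J(K). -/
noncomputable section

open Set intervalIntegral

/-- `ℂⁿ`, the complex Euclidean space. -/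
abbrev Cn (n : ℕ) := EuclideanSpace ℂ (Fin n)

/-- The standard symplectic form `ω(x,y) = Im⟨x,y⟩` (inner product conjugate-linear in the
first argument). -/
def symp {n : ℕ} (x y : Cn n) : ℝ := (inner ℂ x y : ℂ).im

/-- `J`, multiplication by the imaginary unit. -/
def Jmul {n : ℕ} (x : Cn n) : Cn n := Complex.I • x

/-- The polar body `K° = {y : ⟨x,y⟩_ℝ ≤ 1 for all x ∈ K}`. -/
def polarC {n : ℕ} (K : Set (Cn n)) : Set (Cn n) :=
  {y | ∀ x ∈ K, (inner ℂ x y : ℂ).re ≤ 1}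

/-- `c_J(K)`, defined by `c_J(K)⁻¹ = sup {ω(x,y) : x, y ∈ K°}`. -/
def cJ {n : ℕ} (K : Set (Cn n)) : ℝ :=
  (sSup {r : ℝ | ∃ x ∈ polarC K, ∃ y ∈ polarC K, r = symp x y})⁻¹

/-!
The sublinearity of the gauge bounds its derivative by the gauge itself, so the gradient of `g_K`
at any point lies in the polar body `K°`. By the bipolar theorem `g_K(v) = sup {⟪v, z⟫ : z ∈ K°}`,
and `⟪J w, z⟫ = ω(w, z)`, hence `g_K(J ∇g_K(γ t)) ≤ sup {ω(x, y) : x, y ∈ K°}` pointwise along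
the curve. Integrating over `[0, T]` gives the bound.
-/

open Pointwise Topology
open scoped InnerProductSpace

section Gauge

variable {E : Type*} [NormedAddCommGroup E]

theorem apply_le_gauge_of_hasFDerivAt [NormedSpace ℝ E] {K : Set E} (hconv : Convex ℝ K)
    (habs : Absorbent ℝ K) {f' : E →L[ℝ] ℝ} {x : E} (hf : HasFDerivAt (gauge K) f' x) (y : E) :
    f' y ≤ gauge K y := by
  have hline : HasDerivAt (fun s : ℝ => gauge K (x + s • y)) (f' y) 0 := by
    have hx : HasFDerivAt (gauge K) f' (x + (0 : ℝ) • y) := by simpa using hf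
    have h := hx.comp_hasDerivAt 0 (((hasDerivAt_id (0 : ℝ)).smul_const y).const_add x)
    simp only [Function.comp_def, id, one_smul] at h
    exact h
  refine le_of_tendsto (by simpa using hline.tendsto_slope_zero_right) ?_
  filter_upwards [self_mem_nhdsWithin] with s (hs : 0 < s)
  have hsub : gauge K (x + s • y) ≤ gauge K x + s * gauge K y := by
    simpa [gauge_smul_of_nonneg hs.le] using gauge_add_le hconv habs x (s • y)
  rw [inv_mul_le_iff₀ hs]
  simpa using (by linarith : gauge K (x + s • y) - gauge K x ≤ s * gauge K y)

variable [InnerProductSpace ℝ E] {K : Set E}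

theorem isBounded_setOf_forall_inner_le_one (hK : K ∈ 𝓝 (0 : E)) :
    Bornology.IsBounded {y : E | ∀ x ∈ K, ⟪x, y⟫_ℝ ≤ 1} := by
  obtain ⟨ε, hε, hball⟩ := Metric.mem_nhds_iff.mp hK
  refine isBounded_iff_forall_norm_le.mpr ⟨2 / ε, fun y hy => ?_⟩
  rcases eq_or_ne y 0 with rfl | hy0
  · simp only [norm_zero]; positivity
  have hny : 0 < ‖y‖ := norm_pos_iff.mpr hy0
  have hx : (ε / 2 / ‖y‖) • y ∈ K := hball <| by
    rw [mem_ball_zero_iff, norm_smul, Real.norm_of_nonneg (by positivity),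
      div_mul_cancel₀ _ hny.ne']
    linarith
  have h := hy _ hx
  have hxy : ⟪(ε / 2 / ‖y‖) • y, y⟫_ℝ = ε / 2 * ‖y‖ := by
    rw [real_inner_smul_left, real_inner_self_eq_norm_sq]
    field_simp
  rw [le_div_iff₀ hε]
  linarith

theorem gauge_le_of_forall_inner_le [CompleteSpace E] (hclosed : IsClosed K)
    (hconv : Convex ℝ K) (h0 : (0 : E) ∈ K) {v : E} {M : ℝ}
    (h : ∀ z, (∀ x ∈ K, ⟪x, z⟫_ℝ ≤ 1) → ⟪v, z⟫_ℝ ≤ M) : gauge K v ≤ M := by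
  have hM : 0 ≤ M := by simpa using h 0 (by simp)
  refine le_of_forall_gt_imp_ge_of_dense fun c hc => ?_
  have hc0 : 0 < c := hM.trans_lt hc
  by_contra hvc
  -- A functional separating `v` from `c • K`, rescaled, is a point of the polar body at which
  -- the pairing with `v` exceeds `c`.
  have hvK : v ∉ c • K := fun hv => hvc (gauge_le_of_mem hc0.le hv)
  obtain ⟨f, s, hfK, hfv⟩ :=
    geometric_hahn_banach_closed_point (hconv.smul c) (hclosed.smul_of_ne_zero hc0.ne') hvK
  have hs : 0 < s := by simpa using hfK 0 ⟨0, h0, smul_zero c⟩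
  set z : E := (c / s) • (InnerProductSpace.toDual ℝ E).symm f
  have hz : ∀ w, ⟪w, z⟫_ℝ = c / s * f w := fun w => by
    rw [real_inner_comm, real_inner_smul_left, InnerProductSpace.toDual_symm_apply]
  have hzpolar : ∀ x ∈ K, ⟪x, z⟫_ℝ ≤ 1 := fun x hx => by
    have hfx : c * f x < s := by simpa using hfK _ ⟨x, hx, rfl⟩
    rw [hz, div_mul_eq_mul_div, div_le_one hs]
    linarith
  have hcv : c < c / s * f v := by
    calc c = c / s * s := by field_simp
      _ < c / s * f v := mul_lt_mul_of_pos_left hfv (div_pos hc0 hs)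
  linarith [hz v ▸ h z hzpolar]

end Gauge

section Polar

variable {n : ℕ} {K : Set (Cn n)}

theorem re_inner_eq_real_inner (x y : Cn n) : (inner ℂ x y).re = ⟪x, y⟫_ℝ := by
  simp [PiLp.inner_apply, RCLike.inner_apply, Complex.re_sum]

theorem mem_polarC_iff {y : Cn n} : y ∈ polarC K ↔ ∀ x ∈ K, ⟪x, y⟫_ℝ ≤ 1 := by
  simp only [polarC, Set.mem_ofPred_eq, re_inner_eq_real_inner]

theorem symp_eq_real_inner_Jmul (x y : Cn n) : symp x y = ⟪Jmul x, y⟫_ℝ := by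
  rw [← re_inner_eq_real_inner, Jmul, inner_smul_left]
  simp [symp]

theorem gradient_gauge_mem_polarC (hconv : Convex ℝ K) (habs : Absorbent ℝ K) {g x : Cn n}
    (hg : HasGradientAt (gauge K) g x) : g ∈ polarC K := by
  refine mem_polarC_iff.mpr fun y hy => ?_
  have h := apply_le_gauge_of_hasFDerivAt hconv habs hg.hasFDerivAt y
  rw [InnerProductSpace.toDual_apply_apply] at h
  rw [real_inner_comm]
  exact h.trans (gauge_le_one_of_mem hy)

theorem bddAbove_symp_polarC (hK : K ∈ 𝓝 0) :
    BddAbove {r : ℝ | ∃ x ∈ polarC K, ∃ y ∈ polarC K, r = symp x y} := by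
  obtain ⟨C, hC⟩ := isBounded_iff_forall_norm_le.mp (isBounded_setOf_forall_inner_le_one hK)
  refine ⟨C * C, ?_⟩
  rintro _ ⟨x, hx, y, hy, rfl⟩
  have hxC := hC x (mem_polarC_iff.mp hx)
  have hyC := hC y (mem_polarC_iff.mp hy)
  calc symp x y ≤ ‖inner ℂ x y‖ := Complex.im_le_norm _
    _ ≤ ‖x‖ * ‖y‖ := norm_inner_le_norm x y
    _ ≤ C * C := mul_le_mul hxC hyC (norm_nonneg y) ((norm_nonneg x).trans hxC)

theorem gauge_Jmul_le_sSup_symp (hclosed : IsClosed K) (hconv : Convex ℝ K) (hK : K ∈ 𝓝 0)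
    {w : Cn n} (hw : w ∈ polarC K) :
    gauge K (Jmul w) ≤ sSup {r : ℝ | ∃ x ∈ polarC K, ∃ y ∈ polarC K, r = symp x y} := by
  refine gauge_le_of_forall_inner_le hclosed hconv (mem_of_mem_nhds hK) fun z hz => ?_
  rw [← symp_eq_real_inner_Jmul]
  exact le_csSup (bddAbove_symp_polarC hK) ⟨w, hw, z, mem_polarC_iff.mpr hz, rfl⟩

end Polar

theorem characteristic_length_upper_bound_general {n : ℕ} (K : Set (Cn n))
    (hKcomp : IsCompact K) (hKconv : Convex ℝ K) (hK0 : (0 : Cn n) ∈ interior K)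
    (gradg : Cn n → Cn n) (U : Set (Cn n)) (hUfr : frontier K ⊆ U)
    (hgrad : ∀ x ∈ U, HasGradientAt (gauge K) (gradg x) x)
    (T : ℝ) (hT : 0 < T) (γ : ℝ → Cn n)
    (hbd : ∀ t ∈ Icc (0 : ℝ) T, γ t ∈ frontier K) :
    (∫ t in (0 : ℝ)..T, gauge K (Jmul (gradg (γ t)))) ≤
      T * sSup {r : ℝ | ∃ x ∈ polarC K, ∃ y ∈ polarC K, r = symp x y} := by
  have hK : K ∈ 𝓝 (0 : Cn n) := mem_interior_iff_mem_nhds.mp hK0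
  have hpointwise : ∀ t ∈ uIoc (0 : ℝ) T, ‖gauge K (Jmul (gradg (γ t)))‖ ≤
      sSup {r : ℝ | ∃ x ∈ polarC K, ∃ y ∈ polarC K, r = symp x y} := by
    intro t ht
    rw [uIoc_of_le hT.le] at ht
    have hgrad_polar := gradient_gauge_mem_polarC hKconv (absorbent_nhds_zero hK)
      (hgrad _ (hUfr (hbd t (Ioc_subset_Icc_self ht))))
    rw [Real.norm_of_nonneg (gauge_nonneg _)]
    exact gauge_Jmul_le_sSup_symp hKcomp.isClosed hKconv hK hgrad_polar
  -- Bounding the norm of the integral needs no integrability of the integrand.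
  calc (∫ t in (0 : ℝ)..T, gauge K (Jmul (gradg (γ t))))
      ≤ ‖∫ t in (0 : ℝ)..T, gauge K (Jmul (gradg (γ t)))‖ := Real.le_norm_self _
    _ ≤ _ * |T - 0| := intervalIntegral.norm_integral_le_of_norm_le_const hpointwise
    _ = _ := by rw [sub_zero, abs_of_pos hT, mul_comm]

/-- for a convex body `K ⊂ ℂⁿ` with gauge differentiable near `∂K` and a closed
characteristic `γ : [0,T] → ∂K`, the `g_K`-length of `γ` is at most
`T · sup {ω(x,y) : x, y ∈ K°} = T / c_J(K)`. -/
theorem characteristic_length_upper_bound {n : ℕ} (K : Set (Cn n))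
    (hKcomp : IsCompact K) (hKconv : Convex ℝ K) (hK0 : (0 : Cn n) ∈ interior K)
    (gradg : Cn n → Cn n) (U : Set (Cn n)) (hUopen : IsOpen U) (hUfr : frontier K ⊆ U)
    (hgrad : ∀ x ∈ U, HasGradientAt (gauge K) (gradg x) x)
    (T : ℝ) (hT : 0 < T) (γ : ℝ → Cn n)
    (hbd : ∀ t ∈ Icc (0 : ℝ) T, γ t ∈ frontier K)
    (hclosed : γ 0 = γ T)
    (hchar : ∀ t ∈ Icc (0 : ℝ) T, HasDerivAt γ (Jmul (gradg (γ t))) t) :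
    (∫ t in (0 : ℝ)..T, gauge K (Jmul (gradg (γ t)))) ≤
      T * sSup {r : ℝ | ∃ x ∈ polarC K, ∃ y ∈ polarC K, r = symp x y} :=
  characteristic_length_upper_bound_general K hKcomp hKconv hK0 gradg U hUfr hgrad T hT γ hbd
end
end

section
/- Let m ≥ 3 and let v_1, …, v_m ∈ ℂⁿ satisfy v_1 + ⋯ + v_m = 0. Let p_0 = 0 and p_k = v_1 + ⋯ + v_k for k = 1, …, m (so p_m = 0), and let A = (1/2) Σ_{k=0}^{m−1} ω(p_k, p_{k+1}) be the symplectic action of the closed polygon with side vectors v_1, …, v_m. Then A ≤ (1 / (4 tan(π/m))) · Σ_{i=1}^{m} ‖v_i‖². -/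
/-!
Index the vertices by `ZMod m` and take the discrete Fourier transform `F` of the vertex
sequence. Shifting the index by one multiplies `F j` by `ζʲ`, `ζ = exp (2πi/m)`, so by Parseval
both sides are diagonal in the Fourier modes: mode `j` contributes `sin (2φ) ‖F j‖²` to
`m · Σ ω(p_k, p_{k+1})` and `4 sin² φ ‖F j‖²` to `m · Σ ‖vᵢ‖²`, where `φ = πj/m`.
For `φ ∈ [π/m, π)` the inequality `sin φ cos φ ≤ sin² φ / tan (π/m)` is
`sin φ · sin (φ - π/m) ≥ 0`, and the mode `j = 0` contributes nothing to either side.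
-/

noncomputable section

open Set intervalIntegral

open Finset ZMod Real

lemma Real.sin_mul_cos_le_sin_sq_div_tan {α φ : ℝ} (hα : 0 < α) (hαφ : α ≤ φ) (hφ : φ < π) :
    sin φ * cos φ ≤ sin φ ^ 2 / tan α := by
  have hsinα : 0 < sin α := sin_pos_of_pos_of_lt_pi hα (hαφ.trans_lt hφ)
  have hprod : 0 ≤ sin φ * sin (φ - α) :=
    mul_nonneg (sin_nonneg_of_nonneg_of_le_pi (hα.le.trans hαφ) hφ.le)
      (sin_nonneg_of_nonneg_of_le_pi (by linarith) (by linarith))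
  rw [sin_sub] at hprod
  rw [tan_eq_sin_div_cos, div_div_eq_mul_div, le_div_iff₀ hsinα]
  nlinarith

namespace ZMod

variable {N : ℕ} [NeZero N] {E : Type*} [NormedAddCommGroup E] [InnerProductSpace ℂ E]

lemma conj_stdAddChar (j : ZMod N) : starRingEnd ℂ (stdAddChar j) = stdAddChar (-j) := by
  rw [AddChar.map_neg_eq_inv, stdAddChar_apply, ← Circle.coe_inv_eq_conj, Circle.coe_inv]

lemma sum_stdAddChar_mul (b : ZMod N) :
    ∑ k : ZMod N, stdAddChar (k * b) = if b = 0 then (N : ℂ) else 0 := by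
  rw [AddChar.sum_mulShift b (isPrimitive_stdAddChar N), ZMod.card]
  split_ifs <;> simp

lemma sum_inner_dft (Φ Ψ : ZMod N → E) :
    ∑ k, inner ℂ (𝓕 Φ k) (𝓕 Ψ k) = N * ∑ j, inner ℂ (Φ j) (Ψ j) := by
  have orth (j j' : ZMod N) :
      ∑ k : ZMod N, starRingEnd ℂ (stdAddChar (-(j * k))) * stdAddChar (-(j' * k))
        = if j = j' then (N : ℂ) else 0 := by
    have h (k : ZMod N) : -(-(j * k)) + -(j' * k) = k * (j - j') := by ring
    simp_rw [conj_stdAddChar, ← AddChar.map_add_eq_mul, h, sum_stdAddChar_mul, sub_eq_zero]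
  calc ∑ k, inner ℂ (𝓕 Φ k) (𝓕 Ψ k)
      = ∑ j, ∑ j', (∑ k : ZMod N, starRingEnd ℂ (stdAddChar (-(j * k))) *
          stdAddChar (-(j' * k))) * inner ℂ (Φ j) (Ψ j') := by
        simp_rw [dft_apply, sum_inner, inner_sum, inner_smul_left, inner_smul_right, ← mul_assoc,
          sum_mul]
        rw [sum_comm]
        exact sum_congr rfl fun _ _ ↦ sum_comm
    _ = N * ∑ j, inner ℂ (Φ j) (Ψ j) := by
        simp_rw [orth, ite_mul, zero_mul, sum_ite_eq, Finset.mem_univ, if_true, mul_sum]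

lemma sum_norm_sq_dft (Φ : ZMod N → E) : ∑ k, ‖𝓕 Φ k‖ ^ 2 = N * ∑ j, ‖Φ j‖ ^ 2 := by
  have h := sum_inner_dft Φ Φ
  simp_rw [inner_self_eq_norm_sq_to_K] at h
  apply Complex.ofReal_injective
  push_cast
  exact h

lemma dft_comp_add_one (Φ : ZMod N → E) (k : ZMod N) :
    𝓕 (fun j ↦ Φ (j + 1)) k = stdAddChar k • 𝓕 Φ k := by
  simp only [dft_apply, smul_sum, smul_smul, ← AddChar.map_add_eq_mul]
  refine Fintype.sum_equiv (Equiv.addRight 1) _ _ fun j ↦ ?_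
  simp only [Equiv.coe_addRight]
  congr 2
  ring

lemma im_stdAddChar_le (j : ZMod N) :
    (stdAddChar j).im ≤ 1 / (2 * tan (π / N)) * ‖stdAddChar j - 1‖ ^ 2 := by
  set φ := π * j.val / N
  have hexp : stdAddChar j = Complex.exp (Complex.I * ↑(2 * φ)) := by
    rw [stdAddChar_apply, toCircle_apply]
    push_cast [φ]
    ring_nf
  rw [hexp, Complex.norm_exp_I_mul_ofReal_sub_one, mul_comm Complex.I, Complex.exp_ofReal_mul_I_im,
    mul_div_cancel_left₀ _ two_ne_zero, norm_mul, Real.norm_eq_abs, Real.norm_eq_abs, abs_two,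
    mul_pow, sq_abs, sin_two_mul]
  rcases Nat.eq_zero_or_pos j.val with hj | hj
  · simp [φ, hj]
  · have hN : (0 : ℝ) < N := by exact_mod_cast NeZero.pos N
    have key := sin_mul_cos_le_sin_sq_div_tan (φ := φ) (α := π / N) (by positivity)
      (by
        rw [div_le_div_iff_of_pos_right hN]
        exact le_mul_of_one_le_right pi_pos.le (by exact_mod_cast hj))
      (by
        rw [div_lt_iff₀ hN]
        exact mul_lt_mul_of_pos_left (by exact_mod_cast ZMod.val_lt j) pi_pos)
    calc 2 * sin φ * cos φ = 2 * (sin φ * cos φ) := by ring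
      _ ≤ 2 * (sin φ ^ 2 / tan (π / N)) := by gcongr
      _ = 1 / (2 * tan (π / N)) * (2 ^ 2 * sin φ ^ 2) := by ring

theorem sum_im_inner_add_one_le (f : ZMod N → E) :
    ∑ k, (inner ℂ (f k) (f (k + 1))).im ≤ 1 / (2 * tan (π / N)) * ∑ k, ‖f (k + 1) - f k‖ ^ 2 := by
  have hN : (0 : ℝ) < N := by exact_mod_cast NeZero.pos N
  have hcross :
      (N : ℂ) * ∑ k, inner ℂ (f k) (f (k + 1)) = ∑ j, stdAddChar j * (‖𝓕 f j‖ ^ 2 : ℝ) := by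
    rw [← sum_inner_dft]
    simp_rw [dft_comp_add_one, inner_smul_right, inner_self_eq_norm_sq_to_K]
    push_cast; rfl
  have hdiff :
      (N : ℝ) * ∑ k, ‖f (k + 1) - f k‖ ^ 2 = ∑ j, ‖stdAddChar j - 1‖ ^ 2 * ‖𝓕 f j‖ ^ 2 := by
    rw [← sum_norm_sq_dft]
    refine sum_congr rfl fun j _ ↦ ?_
    change ‖𝓕 ((fun k ↦ f (k + 1)) - f) j‖ ^ 2 = _
    rw [map_sub, Pi.sub_apply, dft_comp_add_one, ← mul_pow, ← norm_smul, sub_smul, one_smul]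
  have him :
      (N : ℝ) * ∑ k, (inner ℂ (f k) (f (k + 1))).im = ∑ j, (stdAddChar j).im * ‖𝓕 f j‖ ^ 2 := by
    have := congrArg Complex.im hcross
    simp only [Complex.im_sum, Complex.mul_im, Complex.natCast_re, Complex.natCast_im,
      Complex.ofReal_re, Complex.ofReal_im, zero_mul, mul_zero, add_zero, zero_add] at this
    exact this
  refine le_of_mul_le_mul_left ?_ hN
  rw [him, mul_left_comm, hdiff, mul_sum]
  refine sum_le_sum fun j _ ↦ ?_
  rw [← mul_assoc]
  exact mul_le_mul_of_nonneg_right (im_stdAddChar_le j) (sq_nonneg _)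

end ZMod

lemma Finset.sum_range_eq_sum_zmod_val {E M : Type*} [AddCommMonoid M] {m : ℕ} [NeZero m]
    (p : ℕ → E) (hp : p m = p 0) (G : E → E → M) :
    ∑ k ∈ range m, G (p k) (p (k + 1)) = ∑ k : ZMod m, G (p k.val) (p (k + 1).val) := by
  obtain ⟨N, rfl⟩ := Nat.exists_eq_succ_of_ne_zero (NeZero.ne m)
  rw [← Fin.sum_univ_eq_sum_range]
  refine Fintype.sum_congr _ _ fun k ↦ ?_
  change G (p k) (p (k + 1)) = G (p k) (p ↑(k + 1 : Fin (N + 1)))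
  rw [Fin.val_add_one]
  split_ifs with hk
  · rw [hk, Fin.val_last, hp]
  · rfl

theorem sum_im_inner_succ_le_of_closed {E : Type*} [NormedAddCommGroup E] [InnerProductSpace ℂ E]
    {m : ℕ} [NeZero m] (p : ℕ → E) (hp : p m = p 0) :
    ∑ k ∈ range m, (inner ℂ (p k) (p (k + 1))).im ≤
      1 / (2 * tan (π / m)) * ∑ k ∈ range m, ‖p (k + 1) - p k‖ ^ 2 := by
  rw [sum_range_eq_sum_zmod_val p hp (fun x y ↦ (inner ℂ x y).im),
    sum_range_eq_sum_zmod_val p hp (fun x y ↦ ‖y - x‖ ^ 2)]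
  exact ZMod.sum_im_inner_add_one_le (fun k ↦ p k.val)

open Real in
/-- the symplectic action of a closed polygon in `ℂⁿ` with side vectors
`v 0, …, v (m−1)` summing to zero is at most `(1 / (4 tan(π/m))) · Σ ‖v i‖²`. -/
theorem polygon_action_upper_bound {n : ℕ} (m : ℕ) (hm : 3 ≤ m) (v : ℕ → Cn n)
    (hv : ∑ j ∈ Finset.range m, v j = 0)
    (p : ℕ → Cn n) (hp : ∀ k, p k = ∑ j ∈ Finset.range k, v j) :
    (1 / 2) * ∑ k ∈ Finset.range m, symp (p k) (p (k + 1)) ≤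
      (1 / (4 * Real.tan (π / m))) * ∑ i ∈ Finset.range m, ‖v i‖ ^ 2 := by
  have : NeZero m := ⟨by omega⟩
  have hclosed : p m = p 0 := by rw [hp, hv, hp, sum_range_zero]
  have hside (i : ℕ) : v i = p (i + 1) - p i := by rw [hp, hp, sum_range_succ, add_sub_cancel_left]
  simp only [symp, hside]
  calc (1 / 2) * ∑ k ∈ range m, (inner ℂ (p k) (p (k + 1))).im
      ≤ (1 / 2) * (1 / (2 * tan (π / m)) * ∑ k ∈ range m, ‖p (k + 1) - p k‖ ^ 2) :=
        mul_le_mul_of_nonneg_left (sum_im_inner_succ_le_of_closed p hclosed) (by norm_num)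
    _ = 1 / (4 * tan (π / m)) * ∑ k ∈ range m, ‖p (k + 1) - p k‖ ^ 2 := by ring
end
end
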